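/- Let k ≥ 1, n ≥ 2, and C, C₁ > 0. For the phase φ_N(ρ) = ρ^k + C₁(ρ^{k-1} + ⋯ + ρ) + C N^n ρ, one has (1/N²) log ∫₀^∞ e^{-φ_N(ρ)} ρ^N dρ → 0 as N → ∞. -/

import Mathlib

/-!
The integrand is at most `e^{1-ρ} ρ^N`, because the phase dominates `ρ - 1`, so the integral is
at most `e · N! ≤ e · N^N`. Conversely, on `(N^{-n}, 2N^{-n}]` the phase is bounded by a constant
and `ρ^N ≥ N^{-nN}`, so the integral is at least `c · N^{-n(N+1)}`. Hence its logarithm is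
`O(N log N) = o(N²)`.
-/

open MeasureTheory Filter Real Set
open scoped Nat

lemma integrableOn_exp_neg_mul_pow (N : ℕ) :
    IntegrableOn (fun ρ : ℝ => exp (-ρ) * ρ ^ N) (Ioi 0) :=
  (GammaIntegral_convergent (s := N + 1) (by positivity)).congr_fun
    (fun ρ _ => by simp [rpow_natCast]) measurableSet_Ioi

lemma setIntegral_exp_neg_mul_pow (N : ℕ) :
    ∫ ρ in Ioi (0 : ℝ), exp (-ρ) * ρ ^ N = N ! := by
  rw [← Gamma_nat_eq_factorial, Gamma_eq_integral (by positivity)]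
  exact setIntegral_congr_fun measurableSet_Ioi fun ρ _ => by simp [rpow_natCast]

section Weight

variable {g : ℝ → ℝ} {b : ℝ} (N : ℕ)

lemma exp_neg_comp_mul_pow_le (hgb : ∀ ρ > 0, ρ - b ≤ g ρ) {ρ : ℝ} (hρ : 0 < ρ) :
    exp (-g ρ) * ρ ^ N ≤ exp b * (exp (-ρ) * ρ ^ N) := by
  rw [← mul_assoc, ← exp_add]
  gcongr
  linarith [hgb ρ hρ]

lemma integrableOn_exp_neg_comp_mul_pow (hg : Continuous g) (hgb : ∀ ρ > 0, ρ - b ≤ g ρ) :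
    IntegrableOn (fun ρ => exp (-g ρ) * ρ ^ N) (Ioi 0) := by
  refine ((integrableOn_exp_neg_mul_pow N).const_mul (exp b)).mono' (by fun_prop) ?_
  refine (ae_restrict_iff' measurableSet_Ioi).2 (ae_of_all _ fun ρ (hρ : 0 < ρ) => ?_)
  rw [norm_of_nonneg (by positivity)]
  exact exp_neg_comp_mul_pow_le N hgb hρ

lemma setIntegral_exp_neg_comp_mul_pow_le (hgb : ∀ ρ > 0, ρ - b ≤ g ρ) :
    ∫ ρ in Ioi 0, exp (-g ρ) * ρ ^ N ≤ exp b * N ! := by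
  rw [← setIntegral_exp_neg_mul_pow, ← integral_const_mul]
  refine integral_mono_of_nonneg ?_ ((integrableOn_exp_neg_mul_pow N).const_mul _) ?_
  · exact (ae_restrict_iff' measurableSet_Ioi).2 (ae_of_all _ fun ρ (hρ : 0 < ρ) => by positivity)
  · exact (ae_restrict_iff' measurableSet_Ioi).2
      (ae_of_all _ fun ρ hρ => exp_neg_comp_mul_pow_le N hgb hρ)

lemma exp_neg_mul_pow_succ_le_setIntegral {B a : ℝ} (ha : 0 < a)
    (hint : IntegrableOn (fun ρ => exp (-g ρ) * ρ ^ N) (Ioi 0))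
    (hgB : ∀ ρ ∈ Ioc a (2 * a), g ρ ≤ B) :
    exp (-B) * a ^ (N + 1) ≤ ∫ ρ in Ioi 0, exp (-g ρ) * ρ ^ N := by
  have hsub : Ioc a (2 * a) ⊆ Ioi 0 := fun ρ hρ => ha.trans hρ.1
  calc exp (-B) * a ^ (N + 1) = ∫ _ in Ioc a (2 * a), exp (-B) * a ^ N := by
        rw [setIntegral_const, volume_real_Ioc_of_le (by linarith), smul_eq_mul]
        ring
    _ ≤ ∫ ρ in Ioc a (2 * a), exp (-g ρ) * ρ ^ N :=
        setIntegral_mono_on (integrableOn_const measure_Ioc_lt_top.ne) (hint.mono_set hsub)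
          measurableSet_Ioc fun ρ hρ => by gcongr; exacts [hgB ρ hρ, hρ.1.le]
    _ ≤ ∫ ρ in Ioi 0, exp (-g ρ) * ρ ^ N := by
        refine setIntegral_mono_set hint ?_ hsub.eventuallyLE
        exact (ae_restrict_iff' measurableSet_Ioi).2
          (ae_of_all _ fun ρ (hρ : 0 < ρ) => by positivity)

lemma log_setIntegral_exp_neg_comp_mul_pow_mem_Icc (hg : Continuous g)
    (hgb : ∀ ρ > 0, ρ - b ≤ g ρ) {B a : ℝ} (ha : 0 < a) (hgB : ∀ ρ ∈ Ioc a (2 * a), g ρ ≤ B) :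
    log (∫ ρ in Ioi 0, exp (-g ρ) * ρ ^ N) ∈ Icc (-B + (N + 1) * log a) (b + N * log N) := by
  have hlow := exp_neg_mul_pow_succ_le_setIntegral N ha
    (integrableOn_exp_neg_comp_mul_pow N hg hgb) hgB
  have hpos : 0 < exp (-B) * a ^ (N + 1) := by positivity
  constructor
  · calc -B + (N + 1) * log a = log (exp (-B) * a ^ (N + 1)) := by
          rw [log_mul (by positivity) (by positivity), log_exp, log_pow]; push_cast; ring
      _ ≤ _ := log_le_log hpos hlow
  · calc log (∫ ρ in Ioi 0, exp (-g ρ) * ρ ^ N) ≤ log (exp b * N !) :=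
          log_le_log (hpos.trans_le hlow) (setIntegral_exp_neg_comp_mul_pow_le N hgb)
      _ ≤ b + N * log N := by
          rw [log_mul (by positivity) (by positivity), log_exp, ← log_pow]
          gcongr
          exact_mod_cast Nat.factorial_le_pow N

end Weight

lemma tendsto_inv_sq_mul_add_mul_log (c d e : ℝ) :
    Tendsto (fun N : ℕ => 1 / (N : ℝ) ^ 2 * (c + (d * N + e) * log N)) atTop (nhds 0) := by
  have hlog : Tendsto (fun N : ℕ => log N / N) atTop (nhds 0) :=
    isLittleO_log_id_atTop.tendsto_div_nhds_zero.comp tendsto_natCast_atTop_atTop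
  have hinv : Tendsto (fun N : ℕ => 1 / (N : ℝ)) atTop (nhds 0) :=
    tendsto_one_div_atTop_nhds_zero_nat
  have hlim := ((hinv.mul hinv).const_mul c).add
    ((hlog.const_mul d).add ((hlog.mul hinv).const_mul e))
  simp only [mul_zero, add_zero] at hlim
  refine hlim.congr' ?_
  filter_upwards [eventually_ne_atTop 0] with N hN
  have : (N : ℝ) ≠ 0 := by exact_mod_cast hN
  field_simp

section Phase

variable {k : ℕ} {C₁ : ℝ}

lemma sub_one_le_pow_add_mul_sum (hk : 1 ≤ k) (hC₁ : 0 ≤ C₁) {ρ : ℝ} (hρ : 0 ≤ ρ) :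
    ρ - 1 ≤ ρ ^ k + C₁ * ∑ j ∈ Finset.Ico 1 k, ρ ^ j := by
  have hsum : 0 ≤ C₁ * ∑ j ∈ Finset.Ico 1 k, ρ ^ j := by positivity
  rcases le_total ρ 1 with hρ1 | hρ1
  · linarith [pow_nonneg hρ k]
  · linarith [le_self_pow₀ hρ1 (by omega : k ≠ 0)]

lemma log_setIntegral_phase_mem_Icc (hk : 1 ≤ k) (hC₁ : 0 ≤ C₁) {C m : ℝ} (hC : 0 ≤ C)
    (hm : 1 ≤ m) (N : ℕ) :
    log (∫ ρ in Ioi 0, exp (-(ρ ^ k + C₁ * ∑ j ∈ Finset.Ico 1 k, ρ ^ j + C * m * ρ)) * ρ ^ N) ∈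
      Icc (-(2 ^ k + C₁ * ∑ j ∈ Finset.Ico 1 k, 2 ^ j + 2 * C) - (N + 1) * log m)
        (1 + N * log N) := by
  have hm0 : 0 < m := one_pos.trans_le hm
  have h := log_setIntegral_exp_neg_comp_mul_pow_mem_Icc N
    (b := 1) (g := fun ρ => ρ ^ k + C₁ * ∑ j ∈ Finset.Ico 1 k, ρ ^ j + C * m * ρ) (by fun_prop)
    (fun ρ hρ => by
      have : 0 ≤ C * m * ρ := by positivity
      linarith [sub_one_le_pow_add_mul_sum hk hC₁ hρ.le])
    (B := 2 ^ k + C₁ * ∑ j ∈ Finset.Ico 1 k, 2 ^ j + 2 * C) (inv_pos.2 hm0) fun ρ hρ => by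
      have hρ0 : 0 ≤ ρ := (inv_pos.2 hm0).le.trans hρ.1.le
      have hρ2 : ρ ≤ 2 := hρ.2.trans (by linarith [inv_le_one_of_one_le₀ hm])
      have hlin : C * m * ρ ≤ 2 * C := by
        calc C * m * ρ ≤ C * m * (2 * m⁻¹) := by gcongr; exact hρ.2
          _ = 2 * C := by field_simp
      have hQ : ρ ^ k + C₁ * ∑ j ∈ Finset.Ico 1 k, ρ ^ j ≤
          2 ^ k + C₁ * ∑ j ∈ Finset.Ico 1 k, 2 ^ j := by
        gcongr
      linarith
  rwa [log_inv, mul_neg, ← sub_eq_add_neg] at h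

end Phase

theorem stmt7_general (k n : ℕ) (hk : 1 ≤ k) (C C₁ : ℝ) (hC : 0 < C) (hC₁ : 0 < C₁) :
    Tendsto (fun N : ℕ => (1 / (N : ℝ) ^ 2) *
        Real.log (∫ ρ in Set.Ioi (0:ℝ),
          Real.exp (-(ρ ^ k + C₁ * ∑ j ∈ Finset.Ico 1 k, ρ ^ j + C * (N : ℝ) ^ n * ρ)) * ρ ^ N))
      atTop (nhds 0) := by
  have hlower := tendsto_inv_sq_mul_add_mul_log
    (-(2 ^ k + C₁ * ∑ j ∈ Finset.Ico 1 k, 2 ^ j + 2 * C)) (-n) (-n)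
  have hupper := tendsto_inv_sq_mul_add_mul_log 1 1 0
  refine tendsto_of_tendsto_of_tendsto_of_le_of_le' hlower hupper ?_ ?_ <;>
    filter_upwards [eventually_ge_atTop 1] with N hN <;>
    have h := log_setIntegral_phase_mem_Icc hk hC₁.le hC.le
      (one_le_pow₀ (n := n) (Nat.one_le_cast.2 hN)) N <;>
    rw [log_pow] at h <;>
    gcongr
  · linarith [h.1]
  · linarith [h.2]

/-- Key estimate for the kinetic term: for the phase
`φ_N(ρ) = ρ^k + C₁(ρ^{k-1} + ⋯ + ρ) + C N^n ρ` with `k ≥ 1`, `n ≥ 2`, `C, C₁ > 0`,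
one has `(1/N²) log ∫₀^∞ e^{-φ_N(ρ)} ρ^N dρ → 0` as `N → ∞`. -/
theorem stmt7 (k n : ℕ) (hk : 1 ≤ k) (hn : 2 ≤ n) (C C₁ : ℝ) (hC : 0 < C) (hC₁ : 0 < C₁) :
    Tendsto (fun N : ℕ => (1 / (N : ℝ) ^ 2) *
        Real.log (∫ ρ in Set.Ioi (0:ℝ),
          Real.exp (-(ρ ^ k + C₁ * ∑ j ∈ Finset.Ico 1 k, ρ ^ j + C * (N : ℝ) ^ n * ρ)) * ρ ^ N))
      atTop (nhds 0) :=
  stmt7_general k n hk C C₁ hC hC₁
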